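/- Let S ⊂ ℝ^{n+1} be a nonempty compact set and let y ∈ ℝ^{n+1} with y ∉ S. Then the shifted distance admits the ball characterization u_θ(y) = sup{ r ≥ 0 : the closed Euclidean ball of radius r centered at y − r cos θ · E_{n+1} is disjoint from S }. -/

import Mathlib

open Metric MeasureTheory

noncomputable section

abbrev Euc (n : ℕ) : Type := EuclideanSpace ℝ (Fin (n + 1))

/-- The vertical unit vector `E_{n+1} = (0, …, 0, 1)`. -/
def lastE (n : ℕ) : Euc n := EuclideanSpace.single (Fin.last n) 1

/-- The capillary gauge `F_θ(ξ) = |ξ| - cos θ ⟨ξ, E_{n+1}⟩`. -/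
def capF (n : ℕ) (θ : ℝ) (ξ : Euc n) : ℝ :=
  ‖ξ‖ - Real.cos θ * (inner ℝ ξ (lastE n) : ℝ)

/-- The dual gauge `F°_θ(x) = sup {⟨x, z⟩ / F_θ(z) : z ∈ 𝕊ⁿ}`. -/
def capFdual (n : ℕ) (θ : ℝ) (x : Euc n) : ℝ :=
  ⨆ z : sphere (0 : Euc n) 1, (inner ℝ x (z : Euc n) : ℝ) / capF n θ (z : Euc n)

/-- The shifted distance to a set `S`: `u_θ(y) = inf_{z ∈ S} F°_θ(z - y)`. -/
def shiftedDist (n : ℕ) (θ : ℝ) (S : Set (Euc n)) (y : Euc n) : ℝ :=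
  sInf ((fun z => capFdual n θ (z - y)) '' S)

lemma norm_lastE (n : ℕ) : ‖lastE n‖ = 1 := by simp [lastE]

lemma lastE_mem (n : ℕ) : lastE n ∈ sphere (0 : Euc n) 1 := by
  simp [mem_sphere_zero_iff_norm, norm_lastE]

instance (n : ℕ) : Nonempty (sphere (0 : Euc n) 1) := ⟨⟨lastE n, lastE_mem n⟩⟩

lemma inner_lastE_abs {n : ℕ} {z : Euc n} (hz : ‖z‖ = 1) :
    |(inner ℝ z (lastE n) : ℝ)| ≤ 1 := by
  have := abs_real_inner_le_norm z (lastE n)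
  rwa [hz, norm_lastE, one_mul] at this

lemma capF_ge {n : ℕ} {θ : ℝ} {z : Euc n} (hz : ‖z‖ = 1) :
    1 - |Real.cos θ| ≤ capF n θ z := by
  have h := inner_lastE_abs (n := n) hz
  have h2 : |Real.cos θ * (inner ℝ z (lastE n) : ℝ)| ≤ |Real.cos θ| := by
    rw [abs_mul]; nlinarith [abs_nonneg (Real.cos θ)]
  have := abs_le.mp h2
  simp only [capF, hz]
  linarith [this.2]

lemma capF_le' {n : ℕ} {θ : ℝ} {z : Euc n} (hz : ‖z‖ = 1) :
    capF n θ z ≤ 1 + |Real.cos θ| := by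
  have h := inner_lastE_abs (n := n) hz
  have h2 : |Real.cos θ * (inner ℝ z (lastE n) : ℝ)| ≤ |Real.cos θ| := by
    rw [abs_mul]; nlinarith [abs_nonneg (Real.cos θ)]
  have := abs_le.mp h2
  simp only [capF, hz]
  linarith [this.1]

lemma capF_pos {n : ℕ} {θ : ℝ} (hc : |Real.cos θ| < 1) {z : Euc n} (hz : ‖z‖ = 1) :
    0 < capF n θ z := lt_of_lt_of_le (by linarith) (capF_ge hz)

lemma capFdual_bdd (n : ℕ) {θ : ℝ} (hc : |Real.cos θ| < 1) (x : Euc n) :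
    BddAbove (Set.range fun z : sphere (0 : Euc n) 1 =>
      (inner ℝ x (z : Euc n) : ℝ) / capF n θ (z : Euc n)) := by
  refine ⟨‖x‖ / (1 - |Real.cos θ|), ?_⟩
  rintro _ ⟨z, rfl⟩
  have hz : ‖(z : Euc n)‖ = 1 := by simpa [mem_sphere_zero_iff_norm] using z.2
  have h1 : (inner ℝ x (z : Euc n) : ℝ) ≤ ‖x‖ := by
    have := real_inner_le_norm x (z : Euc n)
    rwa [hz, mul_one] at this
  exact div_le_div₀ (norm_nonneg x) h1 (by linarith) (capF_ge hz)

lemma forall_sphere_inner_le_iff {n : ℕ} (v : Euc n) {r : ℝ} (hr : 0 ≤ r) :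
    (∀ z : sphere (0 : Euc n) 1, (inner ℝ v (z : Euc n) : ℝ) ≤ r) ↔ ‖v‖ ≤ r := by
  constructor
  · intro h
    by_cases hv : v = 0
    · simpa [hv] using hr
    · have hnv : (0:ℝ) < ‖v‖ := norm_pos_iff.mpr hv
      have hz : ‖v‖⁻¹ • v ∈ sphere (0 : Euc n) 1 := by
        simp [mem_sphere_zero_iff_norm, norm_smul, abs_of_pos (inv_pos.mpr hnv),
          inv_mul_cancel₀ hnv.ne']
      have h2 := h ⟨_, hz⟩
      rw [real_inner_smul_right, real_inner_self_eq_norm_sq] at h2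
      have h3 : ‖v‖⁻¹ * ‖v‖ ^ 2 = ‖v‖ := by field_simp
      linarith [h3 ▸ h2]
  · intro h z
    have hz : ‖(z : Euc n)‖ = 1 := by simpa [mem_sphere_zero_iff_norm] using z.2
    have := real_inner_le_norm v (z : Euc n)
    rw [hz, mul_one] at this
    linarith

/-- Key lemma: sublevel sets of the dual gauge are shifted balls. -/
lemma capFdual_le_iff {n : ℕ} {θ : ℝ} (hc : |Real.cos θ| < 1) (x : Euc n)
    {r : ℝ} (hr : 0 ≤ r) :
    capFdual n θ x ≤ r ↔ ‖x + (r * Real.cos θ) • lastE n‖ ≤ r := by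
  rw [capFdual, ciSup_le_iff (capFdual_bdd n hc x),
    ← forall_sphere_inner_le_iff (x + (r * Real.cos θ) • lastE n) hr]
  refine forall_congr' fun z => ?_
  have hz : ‖(z : Euc n)‖ = 1 := by simpa [mem_sphere_zero_iff_norm] using z.2
  have hF : 0 < capF n θ (z : Euc n) := capF_pos hc hz
  rw [div_le_iff₀ hF]
  have hexp : (inner ℝ (x + (r * Real.cos θ) • lastE n) (z : Euc n) : ℝ)
      = (inner ℝ x (z : Euc n) : ℝ) + r * Real.cos θ * (inner ℝ (z : Euc n) (lastE n) : ℝ) := by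
    rw [inner_add_left, real_inner_smul_left, real_inner_comm (lastE n) (z : Euc n)]
  have hFz : r * capF n θ (z : Euc n)
      = r - r * Real.cos θ * (inner ℝ (z : Euc n) (lastE n) : ℝ) := by
    simp only [capF, hz]; ring
  constructor
  · intro h
    rw [hexp]
    rw [hFz] at h
    linarith
  · intro h
    rw [hFz]
    rw [hexp] at h
    linarith

/-- Lower bound of the dual gauge by a multiple of the norm. -/
lemma le_capFdual {n : ℕ} {θ : ℝ} (hc : |Real.cos θ| < 1) (x : Euc n) :
    ‖x‖ / (1 + |Real.cos θ|) ≤ capFdual n θ x := by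
  by_cases hx : x = 0
  · simp [capFdual, hx, ciSup_const]
  · have hnv : (0:ℝ) < ‖x‖ := norm_pos_iff.mpr hx
    have hz : ‖x‖⁻¹ • x ∈ sphere (0 : Euc n) 1 := by
      simp [mem_sphere_zero_iff_norm, norm_smul, abs_of_pos (inv_pos.mpr hnv),
        inv_mul_cancel₀ hnv.ne']
    have hle := le_ciSup (capFdual_bdd n hc x) (⟨_, hz⟩ : sphere (0 : Euc n) 1)
    have hnum : (inner ℝ x (‖x‖⁻¹ • x) : ℝ) = ‖x‖ := by
      rw [real_inner_smul_right, real_inner_self_eq_norm_sq]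
      field_simp
    have hz1 : ‖(‖x‖⁻¹ • x : Euc n)‖ = 1 := by simpa [mem_sphere_zero_iff_norm] using hz
    have hFpos : 0 < capF n θ (‖x‖⁻¹ • x) := capF_pos hc hz1
    have hFle : capF n θ (‖x‖⁻¹ • x) ≤ 1 + |Real.cos θ| := capF_le' hz1
    calc ‖x‖ / (1 + |Real.cos θ|) ≤ ‖x‖ / capF n θ (‖x‖⁻¹ • x) := by
          apply div_le_div_of_nonneg_left hnv.le hFpos hFle
      _ = (inner ℝ x (‖x‖⁻¹ • x) : ℝ) / capF n θ (‖x‖⁻¹ • x) := by rw [hnum]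
      _ ≤ capFdual n θ x := hle

theorem stmt_9 (n : ℕ) (hn : 1 ≤ n) (θ : ℝ) (hθ : θ ∈ Set.Ioo 0 Real.pi)
    (S : Set (Euc n)) (hS : S.Nonempty) (hSc : IsCompact S)
    (y : Euc n) (hy : y ∉ S) :
    shiftedDist n θ S y =
      sSup {r : ℝ | 0 ≤ r ∧
        closedBall (y - (r * Real.cos θ) • lastE n) r ∩ S = ∅} := by
  obtain ⟨hθ0, hθπ⟩ := hθ
  have hc : |Real.cos θ| < 1 := by
    rw [abs_lt]
    constructor
    · have := Real.cos_lt_cos_of_nonneg_of_le_pi (le_of_lt hθ0) le_rfl hθπ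
      simpa [Real.cos_pi] using this
    · have := Real.cos_lt_cos_of_nonneg_of_le_pi le_rfl hθπ.le hθ0
      simpa [Real.cos_zero] using this
  set R := {r : ℝ | 0 ≤ r ∧ closedBall (y - (r * Real.cos θ) • lastE n) r ∩ S = ∅}
    with hR
  -- pointwise characterization of ball membership
  have hmem : ∀ r : ℝ, 0 ≤ r → ∀ z : Euc n,
      z ∈ closedBall (y - (r * Real.cos θ) • lastE n) r ↔ capFdual n θ (z - y) ≤ r := by
    intro r hr z
    rw [mem_closedBall, dist_eq_norm, capFdual_le_iff hc (z - y) hr]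
    have : z - (y - (r * Real.cos θ) • lastE n) = z - y + (r * Real.cos θ) • lastE n := by
      abel
    rw [this]
  -- empty intersection ↔ strict lower bound
  have hempty : ∀ r : ℝ, 0 ≤ r →
      (closedBall (y - (r * Real.cos θ) • lastE n) r ∩ S = ∅ ↔
        ∀ z ∈ S, r < capFdual n θ (z - y)) := by
    intro r hr
    rw [Set.eq_empty_iff_forall_notMem]
    constructor
    · intro h z hzS
      by_contra hlt
      push_neg at hlt
      exact h z ⟨(hmem r hr z).mpr hlt, hzS⟩
    · rintro h z ⟨hzb, hzS⟩
      exact absurd ((hmem r hr z).mp hzb) (not_le.mpr (h z hzS))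
  have hSne : ((fun z => capFdual n θ (z - y)) '' S).Nonempty := hS.image _
  -- positivity of the shifted distance
  have hdistpos : 0 < infDist y S := by
    rw [← hSc.isClosed.notMem_iff_infDist_pos hS] at *
    exact hy
  have hden : (0:ℝ) < 1 + |Real.cos θ| := by positivity
  have hlow : ∀ z ∈ S, infDist y S / (1 + |Real.cos θ|) ≤ capFdual n θ (z - y) := by
    intro z hz
    refine le_trans ?_ (le_capFdual hc (z - y))
    gcongr
    calc infDist y S ≤ dist y z := infDist_le_dist_of_mem hz
      _ = ‖z - y‖ := by rw [dist_eq_norm, ← norm_neg]; congr 1; abel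
  have hmpos : 0 < shiftedDist n θ S y := by
    have : infDist y S / (1 + |Real.cos θ|) ≤ shiftedDist n θ S y := by
      apply le_csInf hSne
      rintro _ ⟨z, hz, rfl⟩
      exact hlow z hz
    have hq : 0 < infDist y S / (1 + |Real.cos θ|) := by positivity
    linarith
  -- every z in S gives an upper bound consistency: r ∈ R → r ≤ shiftedDist
  have hub : ∀ r ∈ R, r ≤ shiftedDist n θ S y := by
    intro r hrR
    obtain ⟨hr0, hre⟩ := hrR
    apply le_csInf hSne
    rintro _ ⟨z, hz, rfl⟩
    exact ((hempty r hr0).mp hre z hz).le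
  have h0R : (0:ℝ) ∈ R := by
    refine ⟨le_rfl, ?_⟩
    have : y - ((0:ℝ) * Real.cos θ) • lastE n = y := by simp
    rw [this, closedBall_zero, Set.singleton_inter_eq_empty]
    exact hy
  have hRne : R.Nonempty := ⟨0, h0R⟩
  have hRbdd : BddAbove R := ⟨shiftedDist n θ S y, hub⟩
  -- shiftedDist is a lower bound for each capFdual value
  have hinf_le : ∀ z ∈ S, shiftedDist n θ S y ≤ capFdual n θ (z - y) := by
    intro z hz
    apply csInf_le
    · refine ⟨0, ?_⟩
      rintro _ ⟨w, hw, rfl⟩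
      exact le_trans (by positivity) (hlow w hw)
    · exact ⟨z, hz, rfl⟩
  apply le_antisymm
  · by_contra hcon
    push_neg at hcon
    have hmax : max (sSup R) 0 < shiftedDist n θ S y := max_lt hcon hmpos
    obtain ⟨r, hr1, hr2⟩ := exists_between hmax
    have hr0 : 0 ≤ r := le_of_lt (lt_of_le_of_lt (le_max_right _ _) hr1)
    have hrR : r ∈ R := by
      refine ⟨hr0, (hempty r hr0).mpr fun z hz => lt_of_lt_of_le hr2 (hinf_le z hz)⟩
    have := le_csSup hRbdd hrR
    have := lt_of_le_of_lt (le_max_left (sSup R) 0) hr1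
    linarith
  · exact csSup_le hRne hub
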